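/- Let q ≥ 2, r ≥ 0, and f : ℕ → 𝕌 be q-quasimultiplicative with gap ≤ r. If for every sequence (I_i)_{i=1}^∞ of pairwise disjoint intervals in ℕ one has Σ_{i=1}^∞ λ̄_f(I_i) < ∞, then f is q-almost periodic. -/

import Mathlib

open scoped ENNReal

/-- `restrictSet q n I` is `n|_I`: the integer obtained by replacing all base-`q` digits of `n`
at positions outside `I` by `0`. -/
noncomputable def restrictSet (q n : ℕ) (I : Set ℕ) : ℕ :=
  ∑ i ∈ Finset.range n, Set.indicator I (fun i => n / q ^ i % q * q ^ i) i

/-- The (finite) set of all `n ≥ 0` whose base-`q` expansion is supported on `I`,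
i.e. `supp n ⊆ I`. -/
noncomputable def digitNums (q : ℕ) (I : Finset ℕ) : Finset ℕ :=
  (Finset.range (q ^ (I.sup id + 1))).filter (fun n => restrictSet q n ↑I = n)

/-- The average `E_{supp(n) ⊆ I} f(n)` over all `n` with base-`q` support contained in `I`. -/
noncomputable def avgD (q : ℕ) (f : ℕ → ℂ) (I : Finset ℕ) : ℂ :=
  (∑ n ∈ digitNums q I, f n) / (digitNums q I).card

/-- The quantity `λ_f(I) ∈ [0, ∞]` defined by `|E_{supp(n) ⊆ I} f(n)| = exp (−λ_f(I))`. -/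
noncomputable def lam (q : ℕ) (f : ℕ → ℂ) (I : Finset ℕ) : ℝ≥0∞ :=
  if avgD q f I = 0 then ⊤ else ENNReal.ofReal (-Real.log (‖avgD q f I‖))

/-- `λ̄_f(I) = min (λ_f(I), 1)`. -/
noncomputable def lamBar (q : ℕ) (f : ℕ → ℂ) (I : Finset ℕ) : ℝ≥0∞ :=
  min (lam q f I) 1


/-- A bounded sequence `f : ℕ → ℂ` is `q`-almost periodic if for every `ε > 0` there is `L`
such that for every `N` there is a `q^L`-periodic sequence agreeing with `f` up to `ε`
outside a set of at most `εN` elements of `[N]`. -/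
def QAlmostPeriodic (q : ℕ) (f : ℕ → ℂ) : Prop :=
  ∀ ε : ℝ, 0 < ε → ∃ L : ℕ, ∀ N : ℕ, ∃ g : ℕ → ℂ, (∀ n, g (n + q ^ L) = g n) ∧
    (((Finset.range N).filter (fun n => ¬ ‖f n - g n‖ ≤ ε)).card : ℝ) ≤ ε * N

lemma sum_digits_mod (q : ℕ) (n t : ℕ) :
    ∑ i ∈ Finset.range t, n / q ^ i % q * q ^ i = n % q ^ t := by
  induction t with
  | zero => simp [Nat.mod_one]
  | succ t ih =>
      rw [Finset.sum_range_succ, ih, pow_succ, Nat.mod_mul]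
      ring

lemma restrict_eq (q : ℕ) (hq : 2 ≤ q) (n t : ℕ) (I : Set ℕ) (h : n < q ^ t) :
    restrictSet q n I = ∑ i ∈ Finset.range t, Set.indicator I (fun i => n / q ^ i % q * q ^ i) i := by
  classical
  have key : ∀ i : ℕ, n < q ^ i → Set.indicator I (fun i => n / q ^ i % q * q ^ i) i = 0 := by
    intro i hi
    have : n / q ^ i = 0 := Nat.div_eq_of_lt hi
    rw [Set.indicator_apply]
    split_ifs <;> simp [this]
  have h1 : restrictSet q n I
      = ∑ i ∈ Finset.range (max n t), Set.indicator I (fun i => n / q ^ i % q * q ^ i) i := by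
    unfold restrictSet
    refine Finset.sum_subset (Finset.range_subset_range.2 (le_max_left _ _)) ?_
    intro i _ hi
    have hni : n ≤ i := by simpa using hi
    refine key i ?_
    calc n < 2 ^ i := lt_of_le_of_lt hni (Nat.lt_two_pow_self)
      _ ≤ q ^ i := Nat.pow_le_pow_left hq i
  rw [h1]
  refine (Finset.sum_subset (Finset.range_subset_range.2 (le_max_right _ _)) ?_).symm
  intro i _ hi
  have hti : t ≤ i := by simpa using hi
  exact key i (lt_of_lt_of_le h (Nat.pow_le_pow_right (by omega) hti))

lemma sup_Icc_id (a b : ℕ) (hab : a ≤ b) : (Finset.Icc a b).sup id = b :=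
  le_antisymm (Finset.sup_le fun i hi => (Finset.mem_Icc.1 hi).2)
    (Finset.le_sup (f := id) (Finset.mem_Icc.2 ⟨hab, le_rfl⟩))

lemma restrict_Icc (q : ℕ) (hq : 2 ≤ q) (a b n : ℕ) (hab : a ≤ b) (h1 : n < q ^ (b + 1)) :
    n % q ^ a + restrictSet q n ↑(Finset.Icc a b) = n := by
  classical
  rw [restrict_eq q hq n (b+1) _ h1]
  have hsplit : ∑ i ∈ Finset.range (b+1),
      Set.indicator (↑(Finset.Icc a b)) (fun i => n / q ^ i % q * q ^ i) i
      = ∑ i ∈ Finset.Icc a b, n / q ^ i % q * q ^ i := by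
    rw [Finset.sum_indicator_eq_sum_filter]
    congr 1
    ext i
    simp only [Finset.mem_filter, Finset.mem_range, Finset.mem_coe, Finset.mem_Icc]
    constructor
    · tauto
    · intro hi; exact ⟨by omega, hi⟩
  rw [hsplit]
  have hconsec : ∑ i ∈ Finset.Ico 0 a, n / q ^ i % q * q ^ i
      + ∑ i ∈ Finset.Ico a (b+1), n / q ^ i % q * q ^ i
      = ∑ i ∈ Finset.Ico 0 (b+1), n / q ^ i % q * q ^ i :=
    Finset.sum_Ico_consecutive _ (Nat.zero_le a) (by omega)
  rw [Finset.Ico_add_one_right_eq_Icc, ← Finset.range_eq_Ico, ← Finset.range_eq_Ico] at hconsec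
  rw [sum_digits_mod, sum_digits_mod] at hconsec
  rw [Nat.mod_eq_of_lt h1] at hconsec
  omega

lemma mem_digitNums_Icc (q : ℕ) (hq : 2 ≤ q) (a b n : ℕ) (hab : a ≤ b) :
    n ∈ digitNums q (Finset.Icc a b) ↔ n < q ^ (b + 1) ∧ q ^ a ∣ n := by
  rw [digitNums, Finset.mem_filter, Finset.mem_range, sup_Icc_id a b hab]
  constructor
  · rintro ⟨h1, h2⟩
    refine ⟨h1, Nat.dvd_iff_mod_eq_zero.2 ?_⟩
    have := restrict_Icc q hq a b n hab h1
    omega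
  · rintro ⟨h1, h2⟩
    refine ⟨h1, ?_⟩
    have h3 := restrict_Icc q hq a b n hab h1
    have : n % q ^ a = 0 := Nat.dvd_iff_mod_eq_zero.1 h2
    omega

lemma digitNums_Icc_eq_image (q : ℕ) (hq : 2 ≤ q) (a b : ℕ) (hab : a ≤ b) :
    digitNums q (Finset.Icc a b) = (Finset.range (q ^ (b + 1 - a))).image (· * q ^ a) := by
  have hqa : 0 < q ^ a := Nat.pow_pos (by omega)
  ext n
  rw [mem_digitNums_Icc q hq a b n hab, Finset.mem_image]
  constructor
  · rintro ⟨h1, m, rfl⟩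
    refine ⟨m, Finset.mem_range.2 ?_, mul_comm m (q ^ a)⟩
    have hpow : q ^ (b + 1 - a) * q ^ a = q ^ (b + 1) := by
      rw [← pow_add]; congr 1; omega
    rw [mul_comm (q ^ a) m] at h1
    exact lt_of_mul_lt_mul_right (by omega) (Nat.zero_le (q ^ a))
  · rintro ⟨m, hm, rfl⟩
    refine ⟨?_, Dvd.intro_left m rfl⟩
    have hm' := Finset.mem_range.1 hm
    have : q ^ (b + 1 - a) * q ^ a = q ^ (b + 1) := by
      rw [← pow_add]; congr 1; omega
    calc m * q ^ a < q ^ (b + 1 - a) * q ^ a := by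
          exact (Nat.mul_lt_mul_right hqa).2 hm'
      _ = q ^ (b + 1) := this

lemma digitNums_Icc_card (q : ℕ) (hq : 2 ≤ q) (a b : ℕ) (hab : a ≤ b) :
    (digitNums q (Finset.Icc a b)).card = q ^ (b + 1 - a) := by
  rw [digitNums_Icc_eq_image q hq a b hab,
    Finset.card_image_of_injective _ (fun x y h => by
      exact Nat.eq_of_mul_eq_mul_right (Nat.pow_pos (by omega)) h),
    Finset.card_range]

lemma digitNums_subset (q : ℕ) (hq : 2 ≤ q) (a a' b : ℕ) (ha : a ≤ a') (hb : a' ≤ b) :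
    digitNums q (Finset.Icc a' b) ⊆ digitNums q (Finset.Icc a b) := by
  intro n hn
  rw [mem_digitNums_Icc q hq a' b n hb] at hn
  rw [mem_digitNums_Icc q hq a b n (le_trans ha hb)]
  exact ⟨hn.1, dvd_trans (pow_dvd_pow q ha) hn.2⟩

open Complex in
lemma cheby (f : ℕ → ℂ) (D : Finset ℕ) (huni : ∀ n, ‖f n‖ = 1)
    (hD : D.Nonempty) (η : ℝ) (hη : 0 ≤ η) (A : ℂ) (hA : A = (∑ n ∈ D, f n) / (D.card : ℂ)) :
    ((D.filter (fun n => ¬ ‖f n - A‖ ≤ η)).card : ℝ) * η ^ 2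
      ≤ (1 - (‖A‖) ^ 2) * D.card := by
  classical
  have hcardC : (D.card : ℂ) ≠ 0 := by
    exact_mod_cast (Finset.card_pos.2 hD).ne'
  have hS : ∑ n ∈ D, f n = A * (D.card : ℂ) := by
    rw [hA]; field_simp
  have key : ∀ n ∈ D, normSq (f n - A) = 1 + normSq A - 2 * (f n * (starRingEnd ℂ) A).re := by
    intro n _
    rw [Complex.normSq_sub]
    have h1 : Complex.normSq (f n) = 1 := by
      have h := huni n
      rw [← Complex.sq_norm, h]; norm_num
    rw [h1]
  have hid : ∑ n ∈ D, normSq (f n - A) = (1 - normSq A) * D.card := by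
    rw [Finset.sum_congr rfl key, Finset.sum_sub_distrib, Finset.sum_const]
    have hre : ∑ n ∈ D, (f n * (starRingEnd ℂ) A).re
        = ((∑ n ∈ D, f n) * (starRingEnd ℂ) A).re := by
      rw [Finset.sum_mul, Complex.re_sum]
    rw [← Finset.mul_sum, hre, hS]
    have : A * (D.card : ℂ) * (starRingEnd ℂ) A = ((normSq A * D.card : ℝ) : ℂ) := by
      have h2 : A * (D.card : ℂ) * (starRingEnd ℂ) A = (A * (starRingEnd ℂ) A) * (D.card : ℂ) := by
        ring
      rw [h2, Complex.mul_conj]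
      push_cast
      ring
    rw [this, Complex.ofReal_re]
    simp only [nsmul_eq_mul]
    ring
  set bad := D.filter (fun n => ¬ ‖f n - A‖ ≤ η) with hbad
  have h1 : (bad.card : ℝ) * η ^ 2 = ∑ _n ∈ bad, η ^ 2 := by
    rw [Finset.sum_const, nsmul_eq_mul]
  have h2 : ∑ _n ∈ bad, η ^ 2 ≤ ∑ n ∈ bad, normSq (f n - A) := by
    refine Finset.sum_le_sum fun n hn => ?_
    have hn' : ¬ ‖f n - A‖ ≤ η := (Finset.mem_filter.1 hn).2
    have : η ≤ ‖f n - A‖ := le_of_lt (not_le.1 hn')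
    calc η ^ 2 ≤ ‖f n - A‖ ^ 2 := pow_le_pow_left₀ hη this 2
      _ = normSq (f n - A) := Complex.sq_norm _
  have h3 : ∑ n ∈ bad, normSq (f n - A) ≤ ∑ n ∈ D, normSq (f n - A) :=
    Finset.sum_le_sum_of_subset_of_nonneg (Finset.filter_subset _ _)
      (fun n _ _ => Complex.normSq_nonneg _)
  rw [h1]
  calc ∑ _n ∈ bad, η ^ 2 ≤ ∑ n ∈ D, normSq (f n - A) := le_trans h2 h3
    _ = (1 - normSq A) * D.card := hid
    _ = (1 - ‖A‖ ^ 2) * D.card := by rw [Complex.sq_norm]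

lemma avgBound (q : ℕ) (f : ℕ → ℂ)
    (hconv : ∀ a b : ℕ → ℕ,
      (∀ i j : ℕ, i ≠ j → Disjoint (Finset.Icc (a i) (b i)) (Finset.Icc (a j) (b j))) →
      ∑' i : ℕ, lamBar q f (Finset.Icc (a i) (b i)) ≠ ⊤)
    (δ : ℝ) (hδ0 : 0 < δ) :
    ∃ L, ∀ a b : ℕ, L ≤ a → a ≤ b →
      Real.exp (-δ) ≤ ‖avgD q f (Finset.Icc a b)‖ := by
  by_contra hcon
  push_neg at hcon
  choose A B h using hcon
  let s : ℕ → ℕ × ℕ := fun i => Nat.rec (⟨A 0, B 0⟩) (fun _ p => ⟨A (p.2 + 1), B (p.2 + 1)⟩) i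
  have hsS : ∀ i, s (i + 1) = ⟨A ((s i).2 + 1), B ((s i).2 + 1)⟩ := fun i => rfl
  set a : ℕ → ℕ := fun i => (s i).1 with ha
  set b : ℕ → ℕ := fun i => (s i).2 with hb
  have h1 : ∀ i, a i ≤ b i := by
    intro i
    cases i with
    | zero => exact (h 0).2.1
    | succ n => exact (h ((s n).2 + 1)).2.1
  have h3 : ∀ i, ‖avgD q f (Finset.Icc (a i) (b i))‖ < Real.exp (-δ) := by
    intro i
    cases i with
    | zero => exact (h 0).2.2
    | succ n => exact (h ((s n).2 + 1)).2.2
  have h2 : ∀ i, b i < a (i + 1) := by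
    intro i
    have hk : a (i + 1) = A (b i + 1) := rfl
    have := (h (b i + 1)).1
    omega
  have h4 : ∀ i j, i < j → b i < a j := by
    intro i j hij
    induction j, hij using Nat.le_induction with
    | base => exact h2 i
    | succ j hij ih => exact lt_of_lt_of_le ih (le_trans (h1 j) (le_of_lt (h2 j)))
  have hdisj : ∀ i j : ℕ, i ≠ j → Disjoint (Finset.Icc (a i) (b i)) (Finset.Icc (a j) (b j)) := by
    intro i j hij
    rw [Finset.disjoint_left]
    intro x hx hx'
    rw [Finset.mem_Icc] at hx hx'
    rcases Nat.lt_or_ge i j with hlt | hge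
    · have := h4 i j hlt; omega
    · have hlt : j < i := by omega
      have := h4 j i hlt; omega
  have hlb : ∀ i : ℕ, min (ENNReal.ofReal δ) 1 ≤ lamBar q f (Finset.Icc (a i) (b i)) := by
    intro i
    unfold lamBar lam
    by_cases havg : avgD q f (Finset.Icc (a i) (b i)) = 0
    · rw [if_pos havg]
      simp
    · rw [if_neg havg]
      have habs : 0 < ‖avgD q f (Finset.Icc (a i) (b i))‖ :=
        norm_pos_iff.2 havg
      have hlog : Real.log (‖avgD q f (Finset.Icc (a i) (b i))‖) < -δ :=
        (Real.log_lt_iff_lt_exp habs).2 (h3 i)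
      refine le_min (le_trans (min_le_left _ _) ?_) (min_le_right _ _)
      exact ENNReal.ofReal_le_ofReal (by linarith)
  have := hconv a b hdisj
  apply this
  rw [← top_le_iff]
  have hconst : (⊤ : ℝ≥0∞) = ∑' _ : ℕ, min (ENNReal.ofReal δ) 1 := by
    refine (ENNReal.tsum_const_eq_top_of_ne_zero ?_).symm
    have : (0 : ℝ≥0∞) < min (ENNReal.ofReal δ) 1 := by
      refine lt_min ?_ (by norm_num)
      rwa [ENNReal.ofReal_pos]
    exact this.ne'
  rw [hconst]
  exact ENNReal.tsum_le_tsum hlb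

lemma exc_card (q : ℕ) (hq : 2 ≤ q) (f : ℕ → ℂ) (huni : ∀ n, ‖f n‖ = 1)
    (δ η : ℝ) (hδ : 0 ≤ δ) (hη : 0 < η) (a b : ℕ) (hab : a ≤ b)
    (hA : Real.exp (-δ) ≤ ‖avgD q f (Finset.Icc a b)‖) :
    (((digitNums q (Finset.Icc a b)).filter
        (fun x => ¬ ‖f x - avgD q f (Finset.Icc a b)‖ ≤ η)).card : ℝ)
      ≤ 2 * δ / η ^ 2 * (q : ℝ) ^ (b + 1 - a) := by
  have hcard := digitNums_Icc_card q hq a b hab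
  have hpos : 0 < (digitNums q (Finset.Icc a b)).card := by
    rw [hcard]; exact Nat.pow_pos (by omega)
  have hne : (digitNums q (Finset.Icc a b)).Nonempty := Finset.card_pos.1 hpos
  have hch := cheby f (digitNums q (Finset.Icc a b)) huni hne η hη.le
    (avgD q f (Finset.Icc a b)) rfl
  have habs2 : Real.exp (-δ) ^ 2 ≤ ‖avgD q f (Finset.Icc a b)‖ ^ 2 :=
    pow_le_pow_left₀ (Real.exp_nonneg _) hA 2
  have hexp2 : Real.exp (-δ) ^ 2 = Real.exp (-(2*δ)) := by
    rw [pow_two, ← Real.exp_add]; ring_nf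
  have hlb : 1 - 2 * δ ≤ Real.exp (-(2*δ)) := by
    have := Real.add_one_le_exp (-(2*δ)); linarith
  have hfrac : 1 - ‖avgD q f (Finset.Icc a b)‖ ^ 2 ≤ 2 * δ := by
    rw [hexp2] at habs2; linarith
  have hcR : ((digitNums q (Finset.Icc a b)).card : ℝ) = (q : ℝ) ^ (b + 1 - a) := by
    rw [hcard]; push_cast; ring
  have hη2 : (0 : ℝ) < η ^ 2 := by positivity
  rw [show 2 * δ / η ^ 2 * (q : ℝ) ^ (b + 1 - a) = 2 * δ * (q : ℝ) ^ (b + 1 - a) / η ^ 2 by ring,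
    le_div_iff₀ hη2]
  calc (((digitNums q (Finset.Icc a b)).filter
        (fun x => ¬ ‖f x - avgD q f (Finset.Icc a b)‖ ≤ η)).card : ℝ) * η ^ 2
      ≤ (1 - ‖avgD q f (Finset.Icc a b)‖ ^ 2) * (digitNums q (Finset.Icc a b)).card := hch
    _ ≤ 2 * δ * (q : ℝ) ^ (b + 1 - a) := by
        rw [hcR]
        have : (0:ℝ) ≤ (q : ℝ) ^ (b + 1 - a) := by positivity
        nlinarith

lemma compare_avg (q : ℕ) (hq : 2 ≤ q) (f : ℕ → ℂ) (huni : ∀ n, ‖f n‖ = 1)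
    (δ η : ℝ) (hδ : 0 ≤ δ) (hη : 0 < η) (a a' b : ℕ) (haa' : a ≤ a') (hab : a' ≤ b)
    (hAbig : Real.exp (-δ) ≤ ‖avgD q f (Finset.Icc a b)‖)
    (hAsm : Real.exp (-δ) ≤ ‖avgD q f (Finset.Icc a' b)‖)
    (hsmall : 2 * δ / η ^ 2 * ((q : ℝ) ^ (a' - a) + 1) < 1) :
    ‖avgD q f (Finset.Icc a b) - avgD q f (Finset.Icc a' b)‖ ≤ 2 * η := by
  classical
  set Abig := avgD q f (Finset.Icc a b)
  set Asm := avgD q f (Finset.Icc a' b)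
  set Dbig := digitNums q (Finset.Icc a b)
  set Dsm := digitNums q (Finset.Icc a' b)
  have hsub : Dsm ⊆ Dbig := digitNums_subset q hq a a' b haa' hab
  have hEbig := exc_card q hq f huni δ η hδ hη a b (le_trans haa' hab) hAbig
  have hEsm := exc_card q hq f huni δ η hδ hη a' b hab hAsm
  have hcardsm : (Dsm.card : ℝ) = (q : ℝ) ^ (b + 1 - a') := by
    rw [digitNums_Icc_card q hq a' b hab]; push_cast; ring
  have hsplitpow : (q : ℝ) ^ (b + 1 - a) = (q : ℝ) ^ (a' - a) * (q : ℝ) ^ (b + 1 - a') := by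
    rw [← pow_add]; congr 1; omega
  -- find a good point
  have hgood : ∃ x ∈ Dsm, ‖f x - Abig‖ ≤ η ∧ ‖f x - Asm‖ ≤ η := by
    by_contra hno
    push_neg at hno
    have hcover : Dsm ⊆ (Dbig.filter (fun x => ¬ ‖f x - Abig‖ ≤ η))
        ∪ (Dsm.filter (fun x => ¬ ‖f x - Asm‖ ≤ η)) := by
      intro x hx
      rcases Classical.em (‖f x - Abig‖ ≤ η) with h1 | h1
      · have h2 := hno x hx h1
        exact Finset.mem_union_right _ (Finset.mem_filter.2 ⟨hx, not_le.2 h2⟩)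
      · exact Finset.mem_union_left _ (Finset.mem_filter.2 ⟨hsub hx, h1⟩)
    have hcount : (Dsm.card : ℝ) ≤
        ((Dbig.filter (fun x => ¬ ‖f x - Abig‖ ≤ η)).card : ℝ)
        + ((Dsm.filter (fun x => ¬ ‖f x - Asm‖ ≤ η)).card : ℝ) := by
      have := Finset.card_le_card hcover
      have := Finset.card_union_le (Dbig.filter (fun x => ¬ ‖f x - Abig‖ ≤ η))
        (Dsm.filter (fun x => ¬ ‖f x - Asm‖ ≤ η))
      push_cast
      exact_mod_cast le_trans ‹Dsm.card ≤ _› this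
    rw [hcardsm] at hcount
    have hpow : (0:ℝ) < (q : ℝ) ^ (b + 1 - a') := by positivity
    have : (q : ℝ) ^ (b + 1 - a')
        ≤ 2 * δ / η ^ 2 * ((q : ℝ) ^ (a' - a) + 1) * (q : ℝ) ^ (b + 1 - a') := by
      calc (q : ℝ) ^ (b + 1 - a')
          ≤ 2 * δ / η ^ 2 * (q : ℝ) ^ (b + 1 - a) + 2 * δ / η ^ 2 * (q : ℝ) ^ (b + 1 - a') := by
            exact le_trans hcount (by linarith)
        _ = 2 * δ / η ^ 2 * ((q : ℝ) ^ (a' - a) + 1) * (q : ℝ) ^ (b + 1 - a') := by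
            rw [hsplitpow]; ring
    nlinarith
  obtain ⟨x, _, hx1, hx2⟩ := hgood
  calc ‖Abig - Asm‖ = ‖(Abig - f x) + (f x - Asm)‖ := by ring_nf
    _ ≤ ‖Abig - f x‖ + ‖f x - Asm‖ := norm_add_le _ _
    _ ≤ η + η := by
        have : ‖Abig - f x‖ = ‖f x - Abig‖ := by
          exact norm_sub_rev _ _
        rw [this]; exact add_le_add hx1 hx2
    _ = 2 * η := by ring

lemma mod_pow_div_mod (Q n j s t : ℕ) (hQ : 0 < Q) (h : j + s ≤ t) :
    n % Q ^ t / Q ^ j % Q ^ s = n / Q ^ j % Q ^ s := by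
  have hqj : 0 < Q ^ j := Nat.pow_pos hQ
  have hsplit : n = n % Q ^ t + Q ^ j * (Q ^ (t - j) * (n / Q ^ t)) := by
    have h1 : Q ^ j * Q ^ (t - j) = Q ^ t := by rw [← pow_add]; congr 1; omega
    have h2 := Nat.mod_add_div n (Q ^ t)
    rw [← mul_assoc, h1]
    omega
  conv_rhs => rw [hsplit]
  rw [Nat.add_mul_div_left _ _ hqj]
  have h2 : Q ^ (t - j) * (n / Q ^ t) = Q ^ s * (Q ^ (t - j - s) * (n / Q ^ t)) := by
    rw [← mul_assoc]
    congr 1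
    rw [← pow_add]; congr 1; omega
  rw [h2, Nat.add_mul_mod_self_left]

lemma count_allnonzero (Q : ℕ) (hQ : 1 ≤ Q) (T : ℕ) :
    ((Finset.range (Q ^ T)).filter (fun v => ∀ i, i < T → v / Q ^ i % Q ≠ 0)).card
      ≤ (Q - 1) ^ T := by
  classical
  induction T with
  | zero =>
      calc _ ≤ (Finset.range (Q ^ 0)).card := Finset.card_filter_le _ _
        _ = 1 := by simp
        _ = (Q-1)^0 := by simp
  | succ T ih =>
      have hQ0 : 0 < Q := hQ
      refine le_trans (Finset.card_le_card_of_injOn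
        (t := ((Finset.range Q).filter (fun x => x ≠ 0)) ×ˢ
          ((Finset.range (Q ^ T)).filter (fun v => ∀ i, i < T → v / Q ^ i % Q ≠ 0)))
        (fun v => (v % Q, v / Q)) ?_ ?_) ?_
      · intro v hv
        rw [Finset.mem_coe, Finset.mem_filter, Finset.mem_range] at hv
        obtain ⟨hv1, hv2⟩ := hv
        refine Finset.mem_product.2 ⟨Finset.mem_filter.2 ⟨Finset.mem_range.2 (Nat.mod_lt _ hQ0), ?_⟩,
          Finset.mem_filter.2 ⟨Finset.mem_range.2 ?_, ?_⟩⟩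
        · have := hv2 0 (by omega)
          simpa using this
        · rw [Nat.div_lt_iff_lt_mul hQ0]
          calc v < Q ^ (T+1) := hv1
            _ = Q ^ T * Q := by rw [pow_succ]
        · intro i hi
          rw [Nat.div_div_eq_div_mul, ← pow_succ']
          exact hv2 (i+1) (by omega)
      · intro x _ y _ hxy
        have h1 : x % Q = y % Q := congrArg Prod.fst hxy
        have h2 : x / Q = y / Q := congrArg Prod.snd hxy
        calc x = x % Q + Q * (x / Q) := (Nat.mod_add_div x _).symm
          _ = y % Q + Q * (y / Q) := by rw [h1, h2]
          _ = y := Nat.mod_add_div y _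
      · rw [Finset.card_product]
        have hc : ((Finset.range Q).filter (fun x => x ≠ 0)).card = Q - 1 := by
          have he : (Finset.range Q).filter (fun x => x ≠ 0) = Finset.Ico 1 Q := by
            ext x
            simp only [Finset.mem_filter, Finset.mem_range, Finset.mem_Ico]
            omega
          rw [he, Nat.card_Ico]
        rw [hc]
        calc (Q - 1) * _ ≤ (Q - 1) * (Q - 1) ^ T := Nat.mul_le_mul le_rfl ih
          _ = (Q - 1) ^ (T + 1) := (pow_succ' _ _).symm

lemma count_B1 (q : ℕ) (hq : 2 ≤ q) (K L r1 T : ℕ) (hLMK : L + r1 * T ≤ K) :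
    ((Finset.range (q ^ K)).filter
        (fun n => ∀ i, i < T → n / q ^ (L + r1 * i) % q ^ r1 ≠ 0)).card
      ≤ q ^ L * (q ^ r1 - 1) ^ T * q ^ (K - L - r1 * T) := by
  classical
  set Q := q ^ r1 with hQdef
  set M := r1 * T with hMdef
  have hq0 : 0 < q := by omega
  have hQ0 : 0 < Q := Nat.pow_pos hq0
  have hqL : 0 < q ^ L := Nat.pow_pos hq0
  have hqM : q ^ M = Q ^ T := by rw [hQdef, ← pow_mul]
  have hdd : ∀ n : ℕ, n / q ^ L / q ^ M = n / q ^ (L + M) := by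
    intro n; rw [Nat.div_div_eq_div_mul, ← pow_add]
  refine le_trans (Finset.card_le_card_of_injOn
    (t := Finset.range (q ^ L) ×ˢ
      (((Finset.range (Q ^ T)).filter (fun v => ∀ i, i < T → v / Q ^ i % Q ≠ 0)) ×ˢ
        Finset.range (q ^ (K - L - M))))
    (fun n => (n % q ^ L, (n / q ^ L % q ^ M, n / q ^ (L + M)))) ?_ ?_) ?_
  · intro n hn
    rw [Finset.mem_coe, Finset.mem_filter, Finset.mem_range] at hn
    obtain ⟨hn1, hn2⟩ := hn
    refine Finset.mem_product.2 ⟨Finset.mem_range.2 (Nat.mod_lt _ hqL), Finset.mem_product.2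
      ⟨Finset.mem_filter.2 ⟨Finset.mem_range.2 ?_, ?_⟩, Finset.mem_range.2 ?_⟩⟩
    · rw [← hqM]; exact Nat.mod_lt _ (Nat.pow_pos hq0)
    · intro i hi
      rw [hqM]
      have := mod_pow_div_mod Q (n / q ^ L) i 1 T hQ0 (by omega)
      rw [pow_one] at this
      rw [this, Nat.div_div_eq_div_mul]
      have he : q ^ L * Q ^ i = q ^ (L + r1 * i) := by
        rw [hQdef, ← pow_mul, ← pow_add]
      rw [he]
      exact hn2 i hi
    · rw [Nat.div_lt_iff_lt_mul (Nat.pow_pos hq0), ← pow_add]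
      calc n < q ^ K := hn1
        _ ≤ q ^ (K - L - M + (L + M)) := Nat.pow_le_pow_right (by omega) (by omega)
  · intro x _ y _ hxy
    have h1 : x % q ^ L = y % q ^ L := congrArg Prod.fst hxy
    have h2 : x / q ^ L % q ^ M = y / q ^ L % q ^ M := congrArg (fun p => p.2.1) hxy
    have h3 : x / q ^ (L + M) = y / q ^ (L + M) := congrArg (fun p => p.2.2) hxy
    have ex : x / q ^ L = x / q ^ L % q ^ M + q ^ M * (x / q ^ (L + M)) := by
      conv_lhs => rw [← Nat.mod_add_div (x / q ^ L) (q ^ M)]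
      rw [hdd x]
    have ey : y / q ^ L = y / q ^ L % q ^ M + q ^ M * (y / q ^ (L + M)) := by
      conv_lhs => rw [← Nat.mod_add_div (y / q ^ L) (q ^ M)]
      rw [hdd y]
    have ed : x / q ^ L = y / q ^ L := by rw [ex, ey, h2, h3]
    calc x = x % q ^ L + q ^ L * (x / q ^ L) := (Nat.mod_add_div x _).symm
      _ = y % q ^ L + q ^ L * (y / q ^ L) := by rw [h1, ed]
      _ = y := Nat.mod_add_div y _
  · rw [Finset.card_product, Finset.card_product, Finset.card_range, Finset.card_range,
      ← Nat.mul_assoc]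
    exact Nat.mul_le_mul (Nat.mul_le_mul (le_refl _) (count_allnonzero Q (by omega) T)) (le_refl _)

lemma count_Ci (q : ℕ) (hq : 2 ≤ q) (f : ℕ → ℂ) (η : ℝ) (z K : ℕ) (r1 : ℕ)
    (hzK : z + r1 + 1 ≤ K) :
    ((Finset.range (q ^ K)).filter (fun n =>
        n / q ^ z % q ^ r1 = 0 ∧
        ¬ ‖f ((n / q ^ z) * q ^ z)
            - avgD q f (Finset.Icc (z + r1) (K - 1))‖ ≤ η)).card
      ≤ q ^ z * ((digitNums q (Finset.Icc (z + r1) (K - 1))).filter (fun x =>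
          ¬ ‖f x - avgD q f (Finset.Icc (z + r1) (K - 1))‖ ≤ η)).card := by
  classical
  have hq0 : 0 < q := by omega
  have hqz : 0 < q ^ z := Nat.pow_pos hq0
  refine le_trans (Finset.card_le_card_of_injOn
    (t := Finset.range (q ^ z) ×ˢ ((digitNums q (Finset.Icc (z + r1) (K - 1))).filter (fun x =>
          ¬ ‖f x - avgD q f (Finset.Icc (z + r1) (K - 1))‖ ≤ η)))
    (fun n => (n % q ^ z, (n / q ^ z) * q ^ z)) ?_ ?_) ?_
  · intro n hn
    rw [Finset.mem_coe, Finset.mem_filter, Finset.mem_range] at hn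
    obtain ⟨hn1, hn2, hn3⟩ := hn
    dsimp only
    refine Finset.mem_product.2 ⟨Finset.mem_range.2 (Nat.mod_lt _ hqz),
      Finset.mem_filter.2 ⟨?_, hn3⟩⟩
    rw [mem_digitNums_Icc q hq (z + r1) (K - 1) _ (by omega)]
    constructor
    · have h1 : (n / q ^ z) * q ^ z ≤ n := Nat.div_mul_le_self n _
      have h2 : K - 1 + 1 = K := by omega
      rw [h2]
      omega
    · obtain ⟨w, hw⟩ := Nat.dvd_iff_mod_eq_zero.2 hn2
      exact ⟨w, by rw [hw, pow_add]; ring⟩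
  · intro x hx y hy hxy
    have h1 : x % q ^ z = y % q ^ z := congrArg Prod.fst hxy
    have h2 : (x / q ^ z) * q ^ z = (y / q ^ z) * q ^ z := congrArg Prod.snd hxy
    calc x = q ^ z * (x / q ^ z) + x % q ^ z := (Nat.div_add_mod x _).symm
      _ = q ^ z * (y / q ^ z) + y % q ^ z := by
          rw [h1, Nat.eq_of_mul_eq_mul_right hqz h2]
      _ = y := Nat.div_add_mod y _
  · rw [Finset.card_product, Finset.card_range]

/-- If a unimodular `q`-quasimultiplicative sequence with gap `≤ r` has `Σ λ̄_f(I_i) < ∞` for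
every sequence of pairwise disjoint intervals, then `f` is `q`-almost periodic. -/
theorem stmt_18 (q r : ℕ) (hq : 2 ≤ q) (f : ℕ → ℂ)
    (huni : ∀ n, ‖f n‖ = 1) (hf0 : f 0 = 1)
    (hqm : ∀ l n m : ℕ, m < q ^ l → q ^ (l + r) ∣ n → f (n + m) = f n * f m)
    (hconv : ∀ a b : ℕ → ℕ,
      (∀ i j : ℕ, i ≠ j → Disjoint (Finset.Icc (a i) (b i)) (Finset.Icc (a j) (b j))) →
      ∑' i : ℕ, lamBar q f (Finset.Icc (a i) (b i)) ≠ ⊤) :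
    QAlmostPeriodic q f := by
  classical
  suffices H : ∀ ε : ℝ, 0 < ε → ε ≤ 1/2 → ∃ L : ℕ, ∀ N : ℕ, ∃ g : ℕ → ℂ,
      (∀ n, g (n + q ^ L) = g n) ∧
      (((Finset.range N).filter (fun n => ¬ ‖f n - g n‖ ≤ ε)).card : ℝ) ≤ ε * N by
    intro ε hε
    obtain ⟨L, hL⟩ := H (min ε (1/2)) (lt_min hε (by norm_num)) (min_le_right _ _)
    refine ⟨L, fun N => ?_⟩
    obtain ⟨g, hper, hcard⟩ := hL N
    refine ⟨g, hper, ?_⟩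
    have hmono : (Finset.range N).filter (fun n => ¬ ‖f n - g n‖ ≤ ε)
        ⊆ (Finset.range N).filter (fun n => ¬ ‖f n - g n‖ ≤ min ε (1/2)) :=
      Finset.monotone_filter_right _ (fun n _ hn hle => hn (le_trans hle (min_le_left _ _)))
    calc (((Finset.range N).filter (fun n => ¬ ‖f n - g n‖ ≤ ε)).card : ℝ)
        ≤ (((Finset.range N).filter
            (fun n => ¬ ‖f n - g n‖ ≤ min ε (1/2))).card : ℝ) := by
          exact_mod_cast Finset.card_le_card hmono
      _ ≤ min ε (1/2) * N := hcard
      _ ≤ ε * N := mul_le_mul_of_nonneg_right (min_le_left _ _) (Nat.cast_nonneg N)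
  intro ε hε hεhalf
  -- setup
  set r1 := max r 1 with hr1def
  have hr1pos : 1 ≤ r1 := le_max_right _ _
  have hqm1 : ∀ l n m : ℕ, m < q ^ l → q ^ (l + r1) ∣ n → f (n + m) = f n * f m :=
    fun l n m hm hd => hqm l n m hm (dvd_trans (pow_dvd_pow q (by omega)) hd)
  set η := ε / 3 with hηdef
  have hη : 0 < η := by positivity
  have hη2 : (0:ℝ) < η ^ 2 := by positivity
  set Q := q ^ r1 with hQdef
  have hQ2 : 2 ≤ Q := le_trans hq (Nat.le_self_pow (by omega) q)
  have hQR : (0:ℝ) < (Q:ℝ) := by positivity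
  have hratio : ((Q:ℝ) - 1)/(Q:ℝ) < 1 := by
    rw [div_lt_one hQR]; linarith
  obtain ⟨T, hT⟩ := exists_pow_lt_of_lt_one
    (show (0:ℝ) < ε/(2*q) by positivity) hratio
  set M := r1 * T with hMdef
  set δ := min (η^2/(8*(q:ℝ)^M)) (ε*η^2/(4*((T:ℝ)+1))) with hδdef
  have hδ0 : 0 < δ := lt_min (by positivity) (by positivity)
  obtain ⟨L, hL⟩ := avgBound q f hconv δ hδ0
  set Lout := L + M + r1 with hLoutdef
  refine ⟨Lout, fun N => ?_⟩
  by_cases hN : N ≤ q ^ Lout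
  · refine ⟨fun n => f (n % q ^ Lout), fun n => by simp [Nat.add_mod_right], ?_⟩
    have hempty : (Finset.range N).filter
        (fun n => ¬ ‖f n - f (n % q ^ Lout)‖ ≤ ε) = ∅ := by
      refine Finset.filter_eq_empty_iff.2 ?_
      intro n hn
      rw [Nat.mod_eq_of_lt (lt_of_lt_of_le (Finset.mem_range.1 hn) hN)]
      simp [hε.le]
    rw [hempty]
    simp only [Finset.card_empty, Nat.cast_zero]
    positivity
  · push_neg at hN
    set K := Nat.clog q N with hKdef
    have hNK : N ≤ q ^ K := Nat.le_pow_clog (by omega) N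
    have hN2 : 2 ≤ N := by
      have : 1 ≤ q ^ Lout := Nat.one_le_pow _ _ (by omega)
      omega
    have hKN : q ^ (K - 1) < N := Nat.pow_pred_clog_lt_self (by omega) hN2
    have hLK : Lout < K := by
      by_contra hcon
      push_neg at hcon
      have : q ^ K ≤ q ^ Lout := Nat.pow_le_pow_right (by omega) hcon
      omega
    have hK1 : Lout ≤ K - 1 := by omega
    set c := avgD q f (Finset.Icc (L + r1) (K - 1)) with hcdef
    set g : ℕ → ℂ := fun n =>
      if h : ∃ i, i < T ∧ (n % q ^ Lout) / q ^ (L + r1 * i) % q ^ r1 = 0 then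
        c * f ((n % q ^ Lout) % q ^ (L + r1 * Nat.find h)) else 0 with hgdef
    have hper : ∀ n, g (n + q ^ Lout) = g n := by
      intro n
      simp only [hgdef, Nat.add_mod_right]
    refine ⟨g, hper, ?_⟩
    -- exponent bookkeeping helper
    have hblockle : ∀ i, i < T → L + r1 * i + r1 ≤ L + M := by
      intro i hi
      have h1 : r1 * (i + 1) ≤ r1 * T := Nat.mul_le_mul_left r1 (by omega)
      have h2 : r1 * (i + 1) = r1 * i + r1 := by ring
      omega
    -- block invariance
    have hblocks : ∀ n i, i < T →
        (n % q ^ Lout) / q ^ (L + r1 * i) % q ^ r1 = n / q ^ (L + r1 * i) % q ^ r1 := by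
      intro n i hi
      exact mod_pow_div_mod q n (L + r1 * i) r1 Lout (by omega)
        (by have := hblockle i hi; omega)
    -- the bad sets
    set B1 := (Finset.range (q ^ K)).filter
      (fun n => ∀ i, i < T → n / q ^ (L + r1 * i) % q ^ r1 ≠ 0) with hB1def
    set Ci : ℕ → Finset ℕ := fun i => (Finset.range (q ^ K)).filter (fun n =>
        n / q ^ (L + r1 * i) % q ^ r1 = 0 ∧
        ¬ ‖f ((n / q ^ (L + r1 * i)) * q ^ (L + r1 * i))
            - avgD q f (Finset.Icc (L + r1 * i + r1) (K - 1))‖ ≤ η) with hCidef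
    -- avg lower bounds
    have hAvg : ∀ i, i < T →
        Real.exp (-δ) ≤ ‖avgD q f (Finset.Icc (L + r1 * i + r1) (K - 1))‖ := by
      intro i hi
      refine hL (L + r1 * i + r1) (K - 1) (by omega) ?_
      have := hblockle i hi
      omega
    have hAvgc : Real.exp (-δ) ≤ ‖c‖ := hL (L + r1) (K - 1) (by omega) (by omega)
    -- comparison bound
    have hq1R : (1:ℝ) ≤ (q:ℝ) := by exact_mod_cast (by omega : 1 ≤ q)
    have hqMR : (1:ℝ) ≤ (q:ℝ) ^ M := by
      calc (1:ℝ) = 1 ^ M := (one_pow M).symm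
        _ ≤ (q:ℝ) ^ M := pow_le_pow_left₀ (by norm_num) hq1R M
    have hδ1 : δ * (8 * (q:ℝ)^M) ≤ η ^ 2 := by
      have h1 : δ ≤ η^2/(8*(q:ℝ)^M) := min_le_left _ _
      rw [le_div_iff₀ (by positivity)] at h1
      exact h1
    have hcomp : ∀ i, i < T →
        ‖avgD q f (Finset.Icc (L + r1 * i + r1) (K - 1)) - c‖ ≤ 2 * η := by
      intro i hi
      have hsub : (L + r1 * i + r1) - (L + r1) = r1 * i := by omega
      have hXle : (q:ℝ) ^ (r1 * i) ≤ (q:ℝ) ^ M := by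
        refine pow_le_pow_right₀ (by exact_mod_cast (by omega : 1 ≤ q)) ?_
        have := hblockle i hi; omega
      have hsmall : 2 * δ / η ^ 2 * ((q : ℝ) ^ ((L + r1 * i + r1) - (L + r1)) + 1) < 1 := by
        rw [hsub, div_mul_eq_mul_div, div_lt_one hη2]
        nlinarith [mul_le_mul_of_nonneg_left hXle (le_of_lt hδ0),
          mul_le_mul_of_nonneg_left hqMR (le_of_lt hδ0)]
      have := compare_avg q hq f huni δ η hδ0.le hη (L + r1) (L + r1 * i + r1) (K - 1)
        (by omega) (by have := hblockle i hi; omega) hAvgc (hAvg i hi) hsmall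
      have hsymm : ‖avgD q f (Finset.Icc (L + r1 * i + r1) (K - 1)) - c‖
          = ‖c - avgD q f (Finset.Icc (L + r1 * i + r1) (K - 1))‖ := by
        exact norm_sub_rev _ _
      rw [hsymm]
      exact this
    -- main subset claim
    have hsubset : (Finset.range N).filter (fun n => ¬ ‖f n - g n‖ ≤ ε)
        ⊆ B1 ∪ (Finset.range T).biUnion Ci := by
      intro n hn
      rw [Finset.mem_filter, Finset.mem_range] at hn
      obtain ⟨hnN, hbadn⟩ := hn
      have hnK : n < q ^ K := lt_of_lt_of_le hnN hNK
      by_cases hP : ∀ i, i < T → n / q ^ (L + r1 * i) % q ^ r1 ≠ 0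
      · exact Finset.mem_union_left _ (Finset.mem_filter.2 ⟨Finset.mem_range.2 hnK, hP⟩)
      · push_neg at hP
        obtain ⟨j, hjT, hjz⟩ := hP
        have hPm : ∃ i, i < T ∧ (n % q ^ Lout) / q ^ (L + r1 * i) % q ^ r1 = 0 :=
          ⟨j, hjT, by rw [hblocks n j hjT]; exact hjz⟩
        set i0 := Nat.find hPm with hi0def
        obtain ⟨hi0T, hi0z⟩ := Nat.find_spec hPm
        set z := L + r1 * i0 with hzdef
        have hzblock : n / q ^ z % q ^ r1 = 0 := by
          rw [← hblocks n i0 hi0T]; exact hi0z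
        have hzLout : z + r1 ≤ Lout := by have := hblockle i0 hi0T; omega
        have hzK1 : z + r1 ≤ K - 1 := le_trans hzLout hK1
        -- g n value
        have hgn : g n = c * f (n % q ^ z) := by
          rw [hgdef]
          simp only []
          rw [dif_pos hPm]
          congr 2
          rw [← hi0def, ← hzdef]
          exact Nat.mod_mod_of_dvd n (pow_dvd_pow q (by omega))
        -- factorization
        set hi := (n / q ^ z) * q ^ z with hhidef
        have hdvd : q ^ (z + r1) ∣ hi := by
          obtain ⟨w, hw⟩ := Nat.dvd_iff_mod_eq_zero.2 hzblock
          exact ⟨w, by rw [hhidef, hw, pow_add]; ring⟩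
        have hfn : f n = f hi * f (n % q ^ z) := by
          have hsum : hi + n % q ^ z = n := by
            rw [hhidef, mul_comm]
            exact Nat.div_add_mod n (q ^ z)
          calc f n = f (hi + n % q ^ z) := by rw [hsum]
            _ = f hi * f (n % q ^ z) :=
              hqm1 z hi (n % q ^ z) (Nat.mod_lt n (Nat.pow_pos (by omega))) hdvd
        have habs : ‖f n - g n‖ = ‖f hi - c‖ := by
          rw [hfn, hgn]
          have : f hi * f (n % q ^ z) - c * f (n % q ^ z) = (f hi - c) * f (n % q ^ z) := by ring
          rw [this, norm_mul, huni (n % q ^ z), mul_one]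
        have hfar : ε < ‖f hi - c‖ := by
          rw [habs] at hbadn
          exact not_le.1 hbadn
        -- conclude far from local average
        have hAz := hcomp i0 hi0T
        have htri : ‖f hi - c‖
            ≤ ‖f hi - avgD q f (Finset.Icc (z + r1) (K - 1))‖
              + ‖avgD q f (Finset.Icc (z + r1) (K - 1)) - c‖ := by
          calc ‖f hi - c‖
              = ‖(f hi - avgD q f (Finset.Icc (z + r1) (K - 1)))
                + (avgD q f (Finset.Icc (z + r1) (K - 1)) - c)‖ := by ring_nf
            _ ≤ _ := norm_add_le _ _
        have hfarA : ¬ ‖f hi - avgD q f (Finset.Icc (z + r1) (K - 1))‖ ≤ η := by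
          intro hle
          have : ε = 3 * η := by rw [hηdef]; ring
          have hAz' : ‖avgD q f (Finset.Icc (z + r1) (K - 1)) - c‖ ≤ 2 * η := hAz
          linarith
        refine Finset.mem_union_right _ (Finset.mem_biUnion.2 ⟨i0, Finset.mem_range.2 hi0T, ?_⟩)
        rw [hCidef]
        simp only [Finset.mem_filter, Finset.mem_range]
        exact ⟨hnK, hzblock, hfarA⟩
    -- counting
    have hcount1 : ((Finset.range N).filter
        (fun n => ¬ ‖f n - g n‖ ≤ ε)).card ≤ B1.card + ∑ i ∈ Finset.range T, (Ci i).card := by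
      calc _ ≤ (B1 ∪ (Finset.range T).biUnion Ci).card := Finset.card_le_card hsubset
        _ ≤ B1.card + ((Finset.range T).biUnion Ci).card := Finset.card_union_le _ _
        _ ≤ B1.card + ∑ i ∈ Finset.range T, (Ci i).card := by
            exact Nat.add_le_add_left Finset.card_biUnion_le _
    -- bound B1
    have hB1 : (B1.card : ℝ) ≤ (ε/2) * N := by
      have h1 := count_B1 q hq K L r1 T (by omega)
      rw [← hB1def] at h1
      have h1' : (B1.card : ℝ) ≤ (q:ℝ)^L * ((Q:ℝ) - 1)^T * (q:ℝ)^(K - L - M) := by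
        have hc1 : ((q ^ r1 - 1 : ℕ) : ℝ) = (Q:ℝ) - 1 := by
          rw [Nat.cast_sub (Nat.one_le_pow _ _ (by omega))]
          rw [hQdef]
          push_cast
          ring
        have hcast : ((q ^ L * (q ^ r1 - 1) ^ T * q ^ (K - L - r1 * T) : ℕ) : ℝ)
            = (q:ℝ)^L * ((Q:ℝ) - 1)^T * (q:ℝ)^(K - L - M) := by
          push_cast [hc1]
          try rw [← hMdef]
          try ring
        rw [← hcast]
        exact_mod_cast h1
      have hQT : ((Q:ℝ))^T = (q:ℝ)^M := by
        rw [hQdef, hMdef]; push_cast; rw [← pow_mul]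
      have hpow1 : (q:ℝ)^L * (q:ℝ)^(K - L - M) = (q:ℝ)^(K - M) := by
        rw [← pow_add]; congr 1; omega
      have hTb : ((Q:ℝ) - 1)^T < (ε/(2*q)) * (q:ℝ)^M := by
        have := hT
        rw [div_pow, div_lt_iff₀ (by positivity)] at this
        calc ((Q:ℝ) - 1)^T < ε/(2*q) * ((Q:ℝ))^T := this
          _ = (ε/(2*q)) * (q:ℝ)^M := by rw [hQT]
      have hqK : (q:ℝ)^(K-1) ≤ (N:ℝ) := by
        exact_mod_cast le_of_lt hKN
      have hqKN : (q:ℝ)^K ≤ (q:ℝ) * N := by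
        have hKsplit : (q:ℝ)^K = (q:ℝ) * (q:ℝ)^(K-1) := by
          rw [← pow_succ']
          congr 1
          omega
        rw [hKsplit]
        exact mul_le_mul_of_nonneg_left hqK (by positivity)
      have hpowKM : (q:ℝ)^(K-M) * (q:ℝ)^M = (q:ℝ)^K := by
        rw [← pow_add]; congr 1; omega
      calc (B1.card : ℝ) ≤ (q:ℝ)^L * ((Q:ℝ) - 1)^T * (q:ℝ)^(K - L - M) := h1'
        _ = ((Q:ℝ) - 1)^T * (q:ℝ)^(K-M) := by rw [mul_comm ((q:ℝ)^L) _, mul_assoc, hpow1]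
        _ ≤ (ε/(2*q)) * (q:ℝ)^M * (q:ℝ)^(K-M) := by
            refine mul_le_mul_of_nonneg_right (le_of_lt hTb) (by positivity)
        _ = (ε/(2*q)) * (q:ℝ)^K := by
            rw [mul_assoc, ← pow_add]
            congr 2
            omega
        _ ≤ (ε/(2*q)) * ((q:ℝ) * N) := by
            refine mul_le_mul_of_nonneg_left hqKN (by positivity)
        _ = (ε/2) * N := by
            field_simp
    -- bound the Ci
    have hq1R : (1:ℝ) ≤ (q:ℝ) := by exact_mod_cast (by omega : 1 ≤ q)
    have hCi : ∀ i ∈ Finset.range T, ((Ci i).card : ℝ) ≤ 2 * δ / η ^ 2 * (q:ℝ)^(K-1) := by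
      intro i hiT
      rw [Finset.mem_range] at hiT
      have hzK1 : L + r1 * i + r1 ≤ K - 1 := le_trans (by have := hblockle i hiT; omega) hK1
      have hzK : L + r1 * i + r1 + 1 ≤ K := by omega
      have h1 := count_Ci q hq f η (L + r1 * i) K r1 hzK
      have h2 := exc_card q hq f huni δ η hδ0.le hη (L + r1 * i + r1) (K - 1) hzK1 (hAvg i hiT)
      have hCieq : Ci i = (Finset.range (q ^ K)).filter (fun n =>
          n / q ^ (L + r1 * i) % q ^ r1 = 0 ∧
          ¬ ‖f ((n / q ^ (L + r1 * i)) * q ^ (L + r1 * i))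
              - avgD q f (Finset.Icc (L + r1 * i + r1) (K - 1))‖ ≤ η) := rfl
      have hδη : (0:ℝ) ≤ 2 * δ / η ^ 2 := by positivity
      calc ((Ci i).card : ℝ)
          ≤ ((q ^ (L + r1 * i) : ℕ) : ℝ) *
            (((digitNums q (Finset.Icc (L + r1 * i + r1) (K - 1))).filter (fun x =>
              ¬ ‖f x - avgD q f (Finset.Icc (L + r1 * i + r1) (K - 1))‖ ≤ η)).card : ℝ) := by
            rw [hCieq]
            exact_mod_cast h1
        _ ≤ ((q ^ (L + r1 * i) : ℕ) : ℝ) * (2 * δ / η ^ 2 * (q:ℝ) ^ ((K-1) + 1 - (L + r1 * i + r1))) := by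
            exact mul_le_mul_of_nonneg_left h2 (by positivity)
        _ = 2 * δ / η ^ 2 * (q:ℝ) ^ (K - r1) := by
            push_cast
            rw [mul_comm, mul_assoc, ← pow_add]
            congr 2
            omega
        _ ≤ 2 * δ / η ^ 2 * (q:ℝ)^(K-1) := by
            exact mul_le_mul_of_nonneg_left (pow_le_pow_right₀ hq1R (by omega)) hδη
    have hCsum : ((∑ i ∈ Finset.range T, (Ci i).card : ℕ) : ℝ)
        ≤ (T:ℝ) * (2 * δ / η ^ 2 * (q:ℝ)^(K-1)) := by
      push_cast
      calc ∑ i ∈ Finset.range T, ((Ci i).card : ℝ)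
          ≤ ∑ _i ∈ Finset.range T, 2 * δ / η ^ 2 * (q:ℝ)^(K-1) := Finset.sum_le_sum hCi
        _ = (T:ℝ) * (2 * δ / η ^ 2 * (q:ℝ)^(K-1)) := by
            rw [Finset.sum_const, nsmul_eq_mul, Finset.card_range]
    have hδ2 : δ * (4 * ((T:ℝ) + 1)) ≤ ε * η ^ 2 := by
      have h1 : δ ≤ ε * η^2/(4*((T:ℝ)+1)) := min_le_right _ _
      rw [le_div_iff₀ (by positivity)] at h1
      exact h1
    have hTfrac : (T:ℝ) * (2 * δ / η ^ 2) ≤ ε / 2 := by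
      have hTnn : (0:ℝ) ≤ (T:ℝ) := Nat.cast_nonneg T
      have h1 : (T:ℝ) * (2 * δ) ≤ (ε/2) * η^2 := by
        nlinarith [mul_nonneg hTnn hδ0.le]
      calc (T:ℝ) * (2 * δ / η ^ 2) = ((T:ℝ) * (2 * δ)) / η^2 := by ring
        _ ≤ ((ε/2) * η^2) / η^2 := by
            exact (div_le_div_iff_of_pos_right hη2).2 h1
        _ = ε/2 := by field_simp
    have hqK1N : (q:ℝ)^(K-1) ≤ (N:ℝ) := by exact_mod_cast le_of_lt hKN
    have hqK1nn : (0:ℝ) ≤ (q:ℝ)^(K-1) := by positivity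
    have hC2 : ((∑ i ∈ Finset.range T, (Ci i).card : ℕ) : ℝ) ≤ (ε/2) * N := by
      calc ((∑ i ∈ Finset.range T, (Ci i).card : ℕ) : ℝ)
          ≤ (T:ℝ) * (2 * δ / η ^ 2 * (q:ℝ)^(K-1)) := hCsum
        _ = ((T:ℝ) * (2 * δ / η ^ 2)) * (q:ℝ)^(K-1) := by ring
        _ ≤ (ε/2) * (q:ℝ)^(K-1) := mul_le_mul_of_nonneg_right hTfrac hqK1nn
        _ ≤ (ε/2) * N := mul_le_mul_of_nonneg_left hqK1N (by positivity)
    calc (((Finset.range N).filter (fun n => ¬ ‖f n - g n‖ ≤ ε)).card : ℝ)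
        ≤ ((B1.card + ∑ i ∈ Finset.range T, (Ci i).card : ℕ) : ℝ) := by exact_mod_cast hcount1
      _ = (B1.card : ℝ) + ((∑ i ∈ Finset.range T, (Ci i).card : ℕ) : ℝ) := by push_cast; ring
      _ ≤ (ε/2) * N + (ε/2) * N := add_le_add hB1 hC2
      _ = ε * N := by ring
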